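/- For every nonnegative integer n and all x, y, the addition formula CP_n^{(k)}(x+y;λ,μ) = Σ_{j=0}^{n} (-1)^j C(n,j) CP_{n-j}^{(k)}(x;λ,μ) · y^{(j)} holds, where y^{(j)} = y(y+1)···(y+j-1) is the rising factorial. -/

import Mathlib

open PowerSeries Finset

noncomputable section

/-- The formal power series log(1+t). -/
def logS : PowerSeries ℝ :=
  PowerSeries.mk fun n => if n = 0 then 0 else (-1) ^ (n + 1) / n

/-- Composition of formal power series (valid when `g` has zero constant term). -/
def compS (f g : PowerSeries ℝ) : PowerSeries ℝ :=
  PowerSeries.mk fun n =>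
    ∑ m ∈ Finset.range (n + 1), (PowerSeries.coeff (R := ℝ) m f) * PowerSeries.coeff (R := ℝ) n (g ^ m)

/-- The formal power series (1+t)^x = Σ (x)_n t^n / n!. -/
def onePow (x : ℝ) : PowerSeries ℝ :=
  PowerSeries.mk fun n => (descPochhammer ℝ n).eval x / n.factorial

/-- The polylogarithm factorial function Lif_k(t) = Σ t^n/(n!(n+1)^k). -/
def Lif (k : ℤ) : PowerSeries ℝ :=
  PowerSeries.mk fun n => 1 / (n.factorial * ((n : ℝ) + 1) ^ k)

/-- The Peters factor (1+(1+t)^λ)^(-μ) = 2^(-μ) exp(-μ log(1 + ((1+t)^λ - 1)/2)). -/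
def peters (lam mu : ℝ) : PowerSeries ℝ :=
  PowerSeries.C (R := ℝ) ((2 : ℝ) ^ (-mu)) *
    compS (PowerSeries.exp ℝ)
      (PowerSeries.C (R := ℝ) (-mu) * compS logS (PowerSeries.C (R := ℝ) (1 / 2) * (onePow lam - 1)))

/-- The Peters polynomials S_n(x;λ,μ). -/
def petersPoly (lam mu x : ℝ) (n : ℕ) : ℝ :=
  n.factorial * PowerSeries.coeff (R := ℝ) n (peters lam mu * onePow x)

/-- Poly-Cauchy polynomials of the first kind C_n^{(k)}(x). -/
def pC (k : ℤ) (x : ℝ) (n : ℕ) : ℝ :=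
  n.factorial * PowerSeries.coeff (R := ℝ) n (compS (Lif k) logS * onePow (-x))

/-- Poly-Cauchy polynomials of the second kind Ĉ_n^{(k)}(x). -/
def pChat (k : ℤ) (x : ℝ) (n : ℕ) : ℝ :=
  n.factorial * PowerSeries.coeff (R := ℝ) n (compS (Lif k) (-logS) * onePow x)

/-- The poly-Cauchy of the first kind and Peters mixed-type polynomials CP_n^{(k)}(x;λ,μ). -/
def CP (k : ℤ) (lam mu x : ℝ) (n : ℕ) : ℝ :=
  n.factorial * PowerSeries.coeff (R := ℝ) n (peters lam mu * compS (Lif k) logS * onePow (-x))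

/-- The poly-Cauchy of the second kind and Peters mixed-type polynomials ĈP_n^{(k)}(x;λ,μ). -/
def CPhat (k : ℤ) (lam mu x : ℝ) (n : ℕ) : ℝ :=
  n.factorial * PowerSeries.coeff (R := ℝ) n (peters lam mu * compS (Lif k) (-logS) * onePow x)

/-- Signed Stirling numbers of the first kind: (x)_n = Σ_l s(n,l) x^l. -/
def stirS (n l : ℕ) : ℝ := (descPochhammer ℝ n).coeff l

/-! The coefficients of `(1+t)^x` are the binomials `Ring.choose x n`, so Chu–Vandermonde gives
`(1+t)^(-(x+y)) = (1+t)^(-x) (1+t)^(-y)`. The generating function of `CP (x + y)` is therefore that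
of `CP x` times `(1+t)^(-y) = Σ (-1)^j y^(j) t^j / j!`, and the formula is the binomial
(exponential) convolution of the two coefficient sequences. -/

theorem PowerSeries.factorial_mul_coeff_mul {R : Type*} [CommSemiring R] (f g : R⟦X⟧) (n : ℕ) :
    n.factorial * coeff n (f * g) =
      ∑ j ∈ range (n + 1), n.choose j * (j.factorial * coeff j f) *
        ((n - j).factorial * coeff (n - j) g) := by
  rw [coeff_mul, Nat.sum_antidiagonal_eq_sum_range_succ_mk, mul_sum]
  refine sum_congr rfl fun j hj => ?_
  rw [← Nat.choose_mul_factorial_mul_factorial (Nat.lt_succ_iff.mp (mem_range.mp hj))]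
  push_cast
  ring

theorem coeff_onePow (x : ℝ) (n : ℕ) : coeff n (onePow x) = Ring.choose x n := by
  rw [onePow, coeff_mk, Ring.choose_eq_smul, ← Polynomial.aeval_eq_smeval, Polynomial.aeval_def,
    ← Polynomial.eval_map, descPochhammer_map, smul_eq_mul, div_eq_inv_mul]

theorem onePow_add (a b : ℝ) : onePow (a + b) = onePow a * onePow b := by
  ext n
  simp only [coeff_mul, coeff_onePow]
  exact Ring.add_choose_eq n (Commute.all a b)

theorem factorial_mul_coeff_onePow_neg (y : ℝ) (n : ℕ) :
    n.factorial * coeff n (onePow (-y)) = (-1) ^ n * (ascPochhammer ℝ n).eval y := by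
  have hfact : (n.factorial : ℝ) ≠ 0 := Nat.cast_ne_zero.mpr n.factorial_ne_zero
  rw [onePow, coeff_mk, mul_div_cancel₀ _ hfact, ← neg_neg y,
    ascPochhammer_eval_neg_eq_descPochhammer, neg_neg, ← mul_assoc, ← mul_pow]
  norm_num

theorem CP_add (k : ℤ) (lam mu x y : ℝ) (n : ℕ) :
    CP k lam mu (x + y) n =
      ∑ j ∈ Finset.range (n + 1),
        (-1 : ℝ) ^ j * (n.choose j : ℝ) * CP k lam mu x (n - j) *
          (ascPochhammer ℝ j).eval y := by
  set F := peters lam mu * compS (Lif k) logS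
  have hsplit : F * onePow (-(x + y)) = onePow (-y) * (F * onePow (-x)) := by
    rw [neg_add, onePow_add]
    ring
  rw [CP, hsplit, factorial_mul_coeff_mul]
  refine sum_congr rfl fun j _ => ?_
  rw [factorial_mul_coeff_onePow_neg, ← CP]
  ring
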